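/- arXiv:1405.0185 — 10 statements merged into one kernel-verified Lean document; each statement's English description precedes it below -/
import Mathlib

section
/- Let u_k ∈ V_k for k = 0, 1, …, N. Then ‖∑_{k=0}^N u_k‖_a² ≤ 2(1 + ρ(ℰ)) ∑_{k=0}^N ‖u_k‖_a², where ρ(ℰ) is the spectral radius of the N×N symmetric matrix ℰ = (ε_{kl}). -/
open scoped RealInnerProductSpace
open Matrix

/-! Split off `u 0` with `‖a + b‖² ≤ 2 (‖a‖² + ‖b‖²)`. For the remaining sum `S`, expanding `‖S‖²`
and applying the strengthened Cauchy–Schwarz inequalities termwise bounds it by the quadratic form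
of `ε` at the vector of norms `(‖u k‖)ₖ`, which is at most `‖ε‖ ∑ ‖u k‖²`. -/

theorem norm_add_sq_le_two_mul {E : Type*} [SeminormedAddCommGroup E] (a b : E) :
    ‖a + b‖ ^ 2 ≤ 2 * (‖a‖ ^ 2 + ‖b‖ ^ 2) :=
  (pow_le_pow_left₀ (norm_nonneg _) (norm_add_le a b) 2).trans add_sq_le

theorem Matrix.dotProduct_mulVec_le_norm_toEuclideanCLM_mul {n : Type*} [Fintype n]
    [DecidableEq n] (A : Matrix n n ℝ) (x : n → ℝ) :
    x ⬝ᵥ A *ᵥ x ≤ ‖toEuclideanCLM (𝕜 := ℝ) A‖ * (x ⬝ᵥ x) := by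
  set y : EuclideanSpace ℝ n := WithLp.toLp 2 x
  have hy : ‖y‖ ^ 2 = x ⬝ᵥ x := by
    rw [← real_inner_self_eq_norm_sq, PiLp.inner_apply]
    simp [y, dotProduct, sq]
  calc x ⬝ᵥ A *ᵥ x = ⟪y, toEuclideanCLM (𝕜 := ℝ) A y⟫ := (inner_toEuclideanCLM A y y).symm
    _ ≤ ‖y‖ * (‖toEuclideanCLM (𝕜 := ℝ) A‖ * ‖y‖) :=
      (real_inner_le_norm _ _).trans (by gcongr; exact ContinuousLinearMap.le_opNorm _ _)
    _ = ‖toEuclideanCLM (𝕜 := ℝ) A‖ * (x ⬝ᵥ x) := by rw [← hy]; ring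

theorem norm_sum_sq_le_of_inner_le {V ι : Type*} [NormedAddCommGroup V] [InnerProductSpace ℝ V]
    [Fintype ι] [DecidableEq ι] (v : ι → V) (ε : Matrix ι ι ℝ)
    (hε : ∀ k l, ⟪v k, v l⟫ ≤ ε k l * ‖v k‖ * ‖v l‖) :
    ‖∑ k, v k‖ ^ 2 ≤ ‖toEuclideanCLM (𝕜 := ℝ) ε‖ * ∑ k, ‖v k‖ ^ 2 := by
  set x : ι → ℝ := fun k => ‖v k‖
  calc ‖∑ k, v k‖ ^ 2 = ∑ k, ∑ l, ⟪v k, v l⟫ := by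
        simp only [← real_inner_self_eq_norm_sq, sum_inner, inner_sum]
        exact Finset.sum_comm
    _ ≤ ∑ k, ∑ l, ε k l * ‖v k‖ * ‖v l‖ := by gcongr with k _ l _; exact hε k l
    _ = x ⬝ᵥ ε *ᵥ x := by
        simp only [x, dotProduct, mulVec, Finset.mul_sum]
        exact Finset.sum_congr rfl fun k _ => Finset.sum_congr rfl fun l _ => by ring
    _ ≤ ‖toEuclideanCLM (𝕜 := ℝ) ε‖ * (x ⬝ᵥ x) :=
        dotProduct_mulVec_le_norm_toEuclideanCLM_mul ε x
    _ = ‖toEuclideanCLM (𝕜 := ℝ) ε‖ * ∑ k, ‖v k‖ ^ 2 := by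
        simp only [x, dotProduct, sq]

theorem stmt2_general {V : Type*} [NormedAddCommGroup V] [InnerProductSpace ℝ V]
    (N : ℕ) (Vs : Fin (N + 1) → Submodule ℝ V)
    (ε : Matrix (Fin N) (Fin N) ℝ)
    (hCS : ∀ k l : Fin N, ∀ v ∈ Vs k.succ, ∀ w ∈ Vs l.succ,
      ⟪v, w⟫ ≤ ε k l * ‖v‖ * ‖w‖)
    (u : Fin (N + 1) → V) (hu : ∀ k, u k ∈ Vs k) :
    ‖∑ k, u k‖ ^ 2 ≤
      2 * (1 + ‖Matrix.toEuclideanCLM (𝕜 := ℝ) ε‖) * ∑ k, ‖u k‖ ^ 2 := by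
  set ρ := ‖toEuclideanCLM (𝕜 := ℝ) ε‖
  set S := ∑ k : Fin N, ‖u k.succ‖ ^ 2
  have hrest : ‖∑ k : Fin N, u k.succ‖ ^ 2 ≤ ρ * S :=
    norm_sum_sq_le_of_inner_le _ ε fun k l => hCS k l _ (hu _) _ (hu _)
  have hρ : 0 ≤ ρ := norm_nonneg _
  have hS : 0 ≤ S := Finset.sum_nonneg fun _ _ => sq_nonneg _
  rw [Fin.sum_univ_succ, Fin.sum_univ_succ (fun k => ‖u k‖ ^ 2)]
  calc ‖u 0 + ∑ k : Fin N, u k.succ‖ ^ 2 ≤ 2 * (‖u 0‖ ^ 2 + ‖∑ k : Fin N, u k.succ‖ ^ 2) :=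
        norm_add_sq_le_two_mul _ _
    _ ≤ 2 * (‖u 0‖ ^ 2 + ρ * S) := by gcongr
    _ ≤ 2 * (1 + ρ) * (‖u 0‖ ^ 2 + S) := by nlinarith [mul_nonneg hρ (sq_nonneg ‖u 0‖)]

/-- For `u_k ∈ V_k`, `k = 0,…,N`, one has
`‖∑ u_k‖² ≤ 2 (1 + ρ(ℰ)) ∑ ‖u_k‖²`, where `ρ(ℰ)` is the spectral radius of the symmetric
matrix `ℰ = (ε_{kl})_{k,l=1}^N` of strengthened Cauchy–Schwarz constants for `V_1,…,V_N`
(for a symmetric matrix, the spectral radius equals the Euclidean operator norm). -/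
theorem stmt2 {V : Type*} [NormedAddCommGroup V] [InnerProductSpace ℝ V]
    (N : ℕ) (Vs : Fin (N + 1) → Submodule ℝ V)
    (ε : Matrix (Fin N) (Fin N) ℝ) (hεsymm : ε.IsSymm) (hεnonneg : ∀ k l, 0 ≤ ε k l)
    (hCS : ∀ k l : Fin N, ∀ v ∈ Vs k.succ, ∀ w ∈ Vs l.succ,
      ⟪v, w⟫ ≤ ε k l * ‖v‖ * ‖w‖)
    (u : Fin (N + 1) → V) (hu : ∀ k, u k ∈ Vs k) :
    ‖∑ k, u k‖ ^ 2 ≤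
      2 * (1 + ‖Matrix.toEuclideanCLM (𝕜 := ℝ) ε‖) * ∑ k, ‖u k‖ ^ 2 :=
  stmt2_general N Vs ε hCS u hu
end

section
/- Under the stated assumptions, the additive Schwarz operator T = ∑_{k=0}^N T_k satisfies the norm bound ‖Tu‖_a ≤ β_2 ‖u‖_a for all u ∈ V^h, with β_2 = 2M(1 + ρ(ℰ)). -/
open scoped RealInnerProductSpace

open Matrix

/-!
Since `a(T_k u, v) = a_h(u, v)` on `V_k`, testing with `v = T_k u` gives
`‖T_k u‖² = a_h(u, T_k u)`, hence `‖T_k u‖ ≤ M ‖u‖`. For `w = ∑_{k ≥ 1} T_k u`, expanding `‖w‖²`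
and applying the strengthened Cauchy–Schwarz inequalities bounds it by the quadratic form of `ℰ`
at the vector `(‖T_k u‖)_k`; with `ρ` the Euclidean operator norm of `ℰ` this gives
`‖w‖² ≤ ρ ∑_{k ≥ 1} ‖T_k u‖² = ρ a_h(u, w) ≤ ρ M ‖u‖ ‖w‖`.
Thus `‖w‖ ≤ ρ M ‖u‖`, and `‖T u‖ ≤ ‖T_0 u‖ + ‖w‖ ≤ M (1 + ρ) ‖u‖`.
-/

section

variable {V : Type*} [NormedAddCommGroup V] [InnerProductSpace ℝ V]

lemma le_of_sq_le_mul {x c : ℝ} (hc : 0 ≤ c) (h : x ^ 2 ≤ c * x) : x ≤ c := by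
  nlinarith

lemma dotProduct_mulVec_self_le_opNorm_mul {ι : Type*} [Fintype ι] [DecidableEq ι]
    (A : Matrix ι ι ℝ) (x : ι → ℝ) :
    x ⬝ᵥ A *ᵥ x ≤ ‖toEuclideanCLM (𝕜 := ℝ) A‖ * ∑ i, x i ^ 2 := by
  have hx : ‖WithLp.toLp 2 x‖ ^ 2 = ∑ i, x i ^ 2 := by
    simp [EuclideanSpace.norm_sq_eq]
  rw [← hx, ← inner_toEuclideanCLM, sq, ← mul_assoc]
  exact (real_inner_le_norm _ _).trans <|
    mul_le_mul_of_nonneg_left (ContinuousLinearMap.le_opNorm _ _) (norm_nonneg _) |>.trans_eq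
      (mul_comm _ _)

theorem norm_sum_sq_le_opNorm_mul_sum_norm_sq {ι : Type*} [Fintype ι] [DecidableEq ι]
    (ε : Matrix ι ι ℝ) (v : ι → V) (hCS : ∀ k l, ⟪v k, v l⟫ ≤ ε k l * ‖v k‖ * ‖v l‖) :
    ‖∑ k, v k‖ ^ 2 ≤ ‖toEuclideanCLM (𝕜 := ℝ) ε‖ * ∑ k, ‖v k‖ ^ 2 := by
  calc ‖∑ k, v k‖ ^ 2 = ∑ k, ∑ l, ⟪v k, v l⟫ := by
        simp_rw [← real_inner_self_eq_norm_sq, sum_inner, inner_sum]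
    _ ≤ ∑ k, ∑ l, ε k l * ‖v k‖ * ‖v l‖ := by gcongr with k _ l _; exact hCS k l
    _ = (fun k ↦ ‖v k‖) ⬝ᵥ ε *ᵥ (fun k ↦ ‖v k‖) := by
        simp only [dotProduct, mulVec, Finset.mul_sum]
        exact Finset.sum_congr rfl fun k _ ↦ Finset.sum_congr rfl fun l _ ↦ by ring
    _ ≤ _ := dotProduct_mulVec_self_le_opNorm_mul ε _

variable {b : V →ₗ[ℝ] V →ₗ[ℝ] ℝ} {P : V →ₗ[ℝ] V} {W : Submodule ℝ V}

lemma norm_sq_eq_of_inner_eq (hmem : ∀ u, P u ∈ W) (hdef : ∀ u, ∀ v ∈ W, ⟪P u, v⟫ = b u v)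
    (u : V) : ‖P u‖ ^ 2 = b u (P u) := by
  rw [← hdef u _ (hmem u), real_inner_self_eq_norm_sq]

lemma norm_le_of_inner_eq {M : ℝ} (hM : 0 ≤ M) (hb : ∀ u v, |b u v| ≤ M * ‖u‖ * ‖v‖)
    (hmem : ∀ u, P u ∈ W) (hdef : ∀ u, ∀ v ∈ W, ⟪P u, v⟫ = b u v) (u : V) :
    ‖P u‖ ≤ M * ‖u‖ := by
  refine le_of_sq_le_mul (by positivity) ?_
  rw [norm_sq_eq_of_inner_eq hmem hdef]
  exact (le_abs_self _).trans (hb _ _)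

end

theorem stmt4_general {V : Type*} [NormedAddCommGroup V] [InnerProductSpace ℝ V]
    (N : ℕ) (Vs : Fin (N + 1) → Submodule ℝ V)
    (a_h : V →ₗ[ℝ] V →ₗ[ℝ] ℝ) (M : ℝ) (hM : 0 < M)
    (hbound : ∀ u v : V, |a_h u v| ≤ M * ‖u‖ * ‖v‖)
    (T : Fin (N + 1) → V →ₗ[ℝ] V)
    (hTmem : ∀ k u, T k u ∈ Vs k)
    (hTdef : ∀ k u, ∀ v ∈ Vs k, ⟪T k u, v⟫ = a_h u v)
    (ε : Matrix (Fin N) (Fin N) ℝ)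
    (hCS : ∀ k l : Fin N, ∀ v ∈ Vs k.succ, ∀ w ∈ Vs l.succ,
      ⟪v, w⟫ ≤ ε k l * ‖v‖ * ‖w‖) :
    ∀ u : V, ‖∑ k, T k u‖ ≤
      2 * M * (1 + ‖Matrix.toEuclideanCLM (𝕜 := ℝ) ε‖) * ‖u‖ := by
  intro u
  set ρ := ‖toEuclideanCLM (𝕜 := ℝ) ε‖
  set w := ∑ k : Fin N, T k.succ u
  have hMu : 0 ≤ M * ‖u‖ := by positivity
  have hρ : 0 ≤ ρ := norm_nonneg _
  have hT₀ : ‖T 0 u‖ ≤ M * ‖u‖ := norm_le_of_inner_eq hM.le hbound (hTmem 0) (hTdef 0) u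
  have hw : ‖w‖ ≤ ρ * (M * ‖u‖) := by
    refine le_of_sq_le_mul (by positivity) ?_
    calc ‖w‖ ^ 2 ≤ ρ * ∑ k : Fin N, ‖T k.succ u‖ ^ 2 :=
          norm_sum_sq_le_opNorm_mul_sum_norm_sq ε _ fun k l ↦
            hCS k l _ (hTmem k.succ u) _ (hTmem l.succ u)
      _ = ρ * a_h u w := by
          simp only [w, map_sum, norm_sq_eq_of_inner_eq (hTmem _) (hTdef _)]
      _ ≤ ρ * (M * ‖u‖ * ‖w‖) := by gcongr; exact (le_abs_self _).trans (hbound _ _)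
      _ = ρ * (M * ‖u‖) * ‖w‖ := by ring
  calc ‖∑ k, T k u‖ = ‖T 0 u + w‖ := by rw [Fin.sum_univ_succ]
    _ ≤ ‖T 0 u‖ + ‖w‖ := norm_add_le _ _
    _ ≤ 2 * M * (1 + ρ) * ‖u‖ := by nlinarith

/-- The additive Schwarz operator `T = ∑_{k=0}^N T_k`, where
`a(T_k u, v) = a_h(u, v)` for all `v ∈ V_k`, satisfies `‖Tu‖_a ≤ β₂ ‖u‖_a` with
`β₂ = 2M(1 + ρ(ℰ))` (spectral radius of the symmetric Cauchy–Schwarz matrix `ℰ`,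
which equals its Euclidean operator norm). -/
theorem stmt4 {V : Type*} [NormedAddCommGroup V] [InnerProductSpace ℝ V]
    [FiniteDimensional ℝ V]
    (N : ℕ) (Vs : Fin (N + 1) → Submodule ℝ V)
    (a_h : V →ₗ[ℝ] V →ₗ[ℝ] ℝ) (M : ℝ) (hM : 0 < M)
    (hbound : ∀ u v : V, |a_h u v| ≤ M * ‖u‖ * ‖v‖)
    (T : Fin (N + 1) → V →ₗ[ℝ] V)
    (hTmem : ∀ k u, T k u ∈ Vs k)
    (hTdef : ∀ k u, ∀ v ∈ Vs k, ⟪T k u, v⟫ = a_h u v)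
    (ε : Matrix (Fin N) (Fin N) ℝ) (hεsymm : ε.IsSymm) (hεnonneg : ∀ k l, 0 ≤ ε k l)
    (hCS : ∀ k l : Fin N, ∀ v ∈ Vs k.succ, ∀ w ∈ Vs l.succ,
      ⟪v, w⟫ ≤ ε k l * ‖v‖ * ‖w‖) :
    ∀ u : V, ‖∑ k, T k u‖ ≤
      2 * M * (1 + ‖Matrix.toEuclideanCLM (𝕜 := ℝ) ε‖) * ‖u‖ :=
  stmt4_general N Vs a_h M hM hbound T hTmem hTdef ε hCS
end

section
/- Under the stated assumptions, the operator T satisfies the lower bound a(Tu, u) ≥ β_1 a(u,u) for all u ∈ V^h, where β_1 = α² C_0^{-2} − β_2 C_E h and β_2 = 2M(1+ρ(ℰ)). -/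
open scoped RealInnerProductSpace

/-- Under the assumptions (perturbation bound, boundedness, coercivity of
`a_h`, stable splitting with constant `C₀`, strengthened Cauchy–Schwarz with spectral
radius `ρ(ℰ)`, and the upper bound `‖Tu‖ ≤ β₂‖u‖`), the additive Schwarz operator
`T = ∑_{k=0}^N T_k` satisfies `a(Tu, u) ≥ β₁ a(u,u)` with
`β₁ = α² C₀⁻² − β₂ C_E h` and `β₂ = 2M(1+ρ(ℰ))`. -/
theorem stmt6 {V : Type*} [NormedAddCommGroup V] [InnerProductSpace ℝ V]
    [FiniteDimensional ℝ V]
    (N : ℕ) (Vs : Fin (N + 1) → Submodule ℝ V)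
    (a_h : V →ₗ[ℝ] V →ₗ[ℝ] ℝ)
    (h C_E M α C₀ ρ : ℝ) (hh : 0 < h) (hCE : 0 < C_E) (hM : 0 < M)
    (hα0 : 0 < α) (hα1 : α < 1) (hC₀ : 0 < C₀) (hρ : 0 ≤ ρ)
    (hE : ∀ u v : V, |a_h u v - ⟪u, v⟫| ≤ C_E * h * ‖u‖ * ‖v‖)
    (hbound : ∀ u v : V, |a_h u v| ≤ M * ‖u‖ * ‖v‖)
    (hcoerc : ∀ u : V, α * ‖u‖ ^ 2 ≤ a_h u u)
    (hsplit : ∀ u : V, ∃ w : Fin (N + 1) → V, (∀ k, w k ∈ Vs k) ∧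
      u = ∑ k, w k ∧ (∑ k, ⟪w k, w k⟫) ≤ C₀ ^ 2 * ⟪u, u⟫)
    (T : Fin (N + 1) → V →ₗ[ℝ] V)
    (hTmem : ∀ k u, T k u ∈ Vs k)
    (hTdef : ∀ k u, ∀ v ∈ Vs k, ⟪T k u, v⟫ = a_h u v)
    (hTnorm : ∀ u : V, ‖∑ k, T k u‖ ≤ 2 * M * (1 + ρ) * ‖u‖) :
    ∀ u : V, (α ^ 2 * (C₀ ^ 2)⁻¹ - 2 * M * (1 + ρ) * C_E * h) * ⟪u, u⟫ ≤
      ⟪∑ k, T k u, u⟫ := by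
  intro u
  obtain ⟨w, hwmem, hwsum, hwbound⟩ := hsplit u
  by_cases hu : u = 0
  · simp [hu]
  have hun : 0 < ‖u‖ := norm_pos_iff.mpr hu
  set S : V := ∑ k, T k u with hS
  -- a_h u S = ∑ ‖T k u‖²
  have hA : a_h u S = ∑ k, ‖T k u‖ ^ 2 := by
    rw [hS, map_sum]
    refine Finset.sum_congr rfl fun k _ => ?_
    rw [← hTdef k u (T k u) (hTmem k u), real_inner_self_eq_norm_sq]
  -- a_h u u = ∑ ⟪T k u, w k⟫
  have h1 : a_h u u = ∑ k, ⟪T k u, w k⟫ := by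
    nth_rewrite 2 [hwsum]
    rw [map_sum]
    exact Finset.sum_congr rfl fun k _ => (hTdef k u (w k) (hwmem k)).symm
  have h2 : a_h u u ≤ ∑ k, ‖T k u‖ * ‖w k‖ := by
    rw [h1]
    exact Finset.sum_le_sum fun k _ => real_inner_le_norm _ _
  have h3 : (∑ k, ‖T k u‖ * ‖w k‖) ^ 2 ≤
      (∑ k, ‖T k u‖ ^ 2) * ∑ k, ‖w k‖ ^ 2 :=
    Finset.sum_mul_sq_le_sq_mul_sq _ _ _
  have hB : (∑ k, ‖w k‖ ^ 2) ≤ C₀ ^ 2 * ‖u‖ ^ 2 := by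
    have := hwbound
    simpa [real_inner_self_eq_norm_sq] using this
  have hcoe : α * ‖u‖ ^ 2 ≤ a_h u u := hcoerc u
  have hApos : 0 ≤ ∑ k, ‖T k u‖ ^ 2 := Finset.sum_nonneg fun k _ => sq_nonneg _
  -- squared chain
  have h4 : (α * ‖u‖ ^ 2) ^ 2 ≤ (∑ k, ‖T k u‖ ^ 2) * (C₀ ^ 2 * ‖u‖ ^ 2) := by
    have hl : (α * ‖u‖ ^ 2) ^ 2 ≤ (∑ k, ‖T k u‖ * ‖w k‖) ^ 2 := by
      apply pow_le_pow_left₀ (by positivity) (hcoe.trans h2)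
    exact hl.trans (h3.trans (mul_le_mul_of_nonneg_left hB hApos))
  -- divide by ‖u‖² and C₀²
  have h5 : α ^ 2 * (C₀ ^ 2)⁻¹ * ‖u‖ ^ 2 ≤ a_h u S := by
    rw [hA]
    have hc : (0:ℝ) < C₀ ^ 2 := by positivity
    have hcancel : α ^ 2 * ‖u‖ ^ 2 ≤ (∑ k, ‖T k u‖ ^ 2) * C₀ ^ 2 := by
      refine le_of_mul_le_mul_right ?_ (pow_pos hun 2)
      nlinarith [h4]
    have : α ^ 2 * (C₀ ^ 2)⁻¹ * ‖u‖ ^ 2 = α ^ 2 * ‖u‖ ^ 2 / C₀ ^ 2 := by ring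
    rw [this, div_le_iff₀ hc]
    exact hcancel
  -- perturbation
  have h6 : a_h u S - ⟪u, S⟫ ≤ C_E * h * ‖u‖ * ‖S‖ :=
    (abs_le.mp (hE u S)).2 |>.trans_eq' rfl
  have h7 : ‖S‖ ≤ 2 * M * (1 + ρ) * ‖u‖ := hTnorm u
  have h8 : ⟪S, u⟫ = ⟪u, S⟫ := real_inner_comm _ _
  have hiu : ⟪u, u⟫ = ‖u‖ ^ 2 := real_inner_self_eq_norm_sq u
  rw [h8, hiu]
  have h9 : C_E * h * ‖u‖ * ‖S‖ ≤ C_E * h * ‖u‖ * (2 * M * (1 + ρ) * ‖u‖) := by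
    apply mul_le_mul_of_nonneg_left h7 (by positivity)
  nlinarith [h5, h6, h9]
end

section
/- Under the stated assumptions, the nonsymmetric additive Schwarz operator S = ∑_{k=0}^N S_k satisfies ‖Su‖_a ≤ γ_2 ‖u‖_a for all u ∈ V^h, with γ_2 = (2M/α)(1 + ρ(ℰ)). -/
/-!
Testing the defining relation of `S k` with `S k u` itself, coercivity and continuity give
`α ‖S k u‖² ≤ M ‖u‖ ‖S k u‖`, hence `‖S 0 u‖ ≤ (M / α) ‖u‖`. For the local part
`w = ∑_{k ≥ 1} S k u`, summing the same relation gives `α ∑ ‖S k u‖² ≤ a_h u w ≤ M ‖u‖ ‖w‖`,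
while the strengthened Cauchy–Schwarz inequalities give `‖w‖² ≤ ⟪x, ℰ x⟫ ≤ ‖ℰ‖ ∑ ‖S k u‖²` for
`x k = ‖S k u‖`. Together `α ‖w‖² ≤ ‖ℰ‖ M ‖u‖ ‖w‖`, so `‖S u‖ ≤ (M / α) (1 + ‖ℰ‖) ‖u‖`,
which is half of `γ₂`.
-/

open scoped RealInnerProductSpace

open Finset

theorem le_div_of_mul_sq_le_mul {α c x : ℝ} (hα : 0 < α) (hc : 0 ≤ c) (hx : 0 ≤ x)
    (h : α * x ^ 2 ≤ c * x) : x ≤ c / α := by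
  rw [le_div_iff₀ hα]
  rcases hx.eq_or_lt with rfl | hx
  · simpa using hc
  · nlinarith

section InnerProductSpace

variable {ι V : Type*} [Fintype ι] [DecidableEq ι]
  [SeminormedAddCommGroup V] [InnerProductSpace ℝ V]

theorem Matrix.sum_mul_mul_le_norm_toEuclideanCLM_mul (ε : Matrix ι ι ℝ) (x : ι → ℝ) :
    ∑ k, ∑ l, ε k l * x k * x l ≤ ‖Matrix.toEuclideanCLM (𝕜 := ℝ) ε‖ * ∑ k, x k ^ 2 := by
  set y : EuclideanSpace ℝ ι := WithLp.toLp 2 x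
  set A := Matrix.toEuclideanCLM (𝕜 := ℝ) ε
  calc ∑ k, ∑ l, ε k l * x k * x l = ⟪y, A y⟫ := by
        rw [Matrix.inner_toEuclideanCLM]
        simp only [dotProduct, Matrix.mulVec, mul_sum]
        exact sum_congr rfl fun k _ => sum_congr rfl fun l _ => by ring
    _ ≤ ‖y‖ * (‖A‖ * ‖y‖) := (real_inner_le_norm _ _).trans (by gcongr; exact A.le_opNorm y)
    _ = ‖A‖ * ∑ k, x k ^ 2 := by
        rw [mul_left_comm, ← sq, EuclideanSpace.real_norm_sq_eq]

theorem norm_sq_sum_le_of_inner_le (v : ι → V) (ε : Matrix ι ι ℝ)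
    (hCS : ∀ k l, ⟪v k, v l⟫ ≤ ε k l * ‖v k‖ * ‖v l‖) :
    ‖∑ k, v k‖ ^ 2 ≤ ‖Matrix.toEuclideanCLM (𝕜 := ℝ) ε‖ * ∑ k, ‖v k‖ ^ 2 :=
  calc ‖∑ k, v k‖ ^ 2 = ∑ k, ∑ l, ⟪v k, v l⟫ := by
        rw [← real_inner_self_eq_norm_sq, sum_inner]
        simp only [inner_sum]
    _ ≤ ∑ k, ∑ l, ε k l * ‖v k‖ * ‖v l‖ := by gcongr with k _ l _; exact hCS k l
    _ ≤ _ := Matrix.sum_mul_mul_le_norm_toEuclideanCLM_mul ε _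

end InnerProductSpace

section Galerkin

variable {ι V : Type*} [SeminormedAddCommGroup V] [Module ℝ V]
  {B : V →ₗ[ℝ] V →ₗ[ℝ] ℝ} {M α : ℝ}

theorem norm_le_of_apply_self_eq (hM : 0 ≤ M) (hα : 0 < α)
    (hbound : ∀ u v : V, |B u v| ≤ M * ‖u‖ * ‖v‖) (hcoerc : ∀ u : V, α * ‖u‖ ^ 2 ≤ B u u)
    {u w : V} (hw : B w w = B u w) : ‖w‖ ≤ M * ‖u‖ / α := by
  refine le_div_of_mul_sq_le_mul hα (by positivity) (norm_nonneg w) ?_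
  calc α * ‖w‖ ^ 2 ≤ B u w := hw ▸ hcoerc w
    _ ≤ M * ‖u‖ * ‖w‖ := (le_abs_self _).trans (hbound u w)

theorem mul_sum_sq_norm_le_of_apply_self_eq [Fintype ι]
    (hbound : ∀ u v : V, |B u v| ≤ M * ‖u‖ * ‖v‖) (hcoerc : ∀ u : V, α * ‖u‖ ^ 2 ≤ B u u)
    {u : V} {w : ι → V} (hw : ∀ k, B (w k) (w k) = B u (w k)) :
    α * ∑ k, ‖w k‖ ^ 2 ≤ M * ‖u‖ * ‖∑ k, w k‖ :=
  calc α * ∑ k, ‖w k‖ ^ 2 ≤ ∑ k, B u (w k) := by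
        rw [mul_sum]
        exact sum_le_sum fun k _ => hw k ▸ hcoerc (w k)
    _ = B u (∑ k, w k) := (map_sum _ _ _).symm
    _ ≤ M * ‖u‖ * ‖∑ k, w k‖ := (le_abs_self _).trans (hbound _ _)

end Galerkin

theorem norm_sum_le_of_apply_self_eq_of_inner_le {ι V : Type*} [Fintype ι] [DecidableEq ι]
    [SeminormedAddCommGroup V] [InnerProductSpace ℝ V] {B : V →ₗ[ℝ] V →ₗ[ℝ] ℝ} {M α : ℝ}
    (hM : 0 ≤ M) (hα : 0 < α)
    (hbound : ∀ u v : V, |B u v| ≤ M * ‖u‖ * ‖v‖) (hcoerc : ∀ u : V, α * ‖u‖ ^ 2 ≤ B u u)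
    {u : V} {w : ι → V} (hw : ∀ k, B (w k) (w k) = B u (w k)) (ε : Matrix ι ι ℝ)
    (hCS : ∀ k l, ⟪w k, w l⟫ ≤ ε k l * ‖w k‖ * ‖w l‖) :
    ‖∑ k, w k‖ ≤ ‖Matrix.toEuclideanCLM (𝕜 := ℝ) ε‖ * (M * ‖u‖) / α := by
  set A := Matrix.toEuclideanCLM (𝕜 := ℝ) ε
  refine le_div_of_mul_sq_le_mul hα (by positivity) (norm_nonneg _) ?_
  calc α * ‖∑ k, w k‖ ^ 2 ≤ α * (‖A‖ * ∑ k, ‖w k‖ ^ 2) := by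
        gcongr; exact norm_sq_sum_le_of_inner_le w ε hCS
    _ = ‖A‖ * (α * ∑ k, ‖w k‖ ^ 2) := by ring
    _ ≤ ‖A‖ * (M * ‖u‖ * ‖∑ k, w k‖) := by
        gcongr ‖A‖ * ?_; exact mul_sum_sq_norm_le_of_apply_self_eq hbound hcoerc hw
    _ = ‖A‖ * (M * ‖u‖) * ‖∑ k, w k‖ := by ring

theorem stmt7_general {V : Type*} [NormedAddCommGroup V] [InnerProductSpace ℝ V]
    (N : ℕ) (Vs : Fin (N + 1) → Submodule ℝ V)
    (a_h : V →ₗ[ℝ] V →ₗ[ℝ] ℝ) (M α : ℝ) (hM : 0 < M) (hα : 0 < α)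
    (hbound : ∀ u v : V, |a_h u v| ≤ M * ‖u‖ * ‖v‖)
    (hcoerc : ∀ u : V, α * ‖u‖ ^ 2 ≤ a_h u u)
    (S : Fin (N + 1) → V →ₗ[ℝ] V)
    (hSmem : ∀ k u, S k u ∈ Vs k)
    (hSdef : ∀ k u, ∀ v ∈ Vs k, a_h (S k u) v = a_h u v)
    (ε : Matrix (Fin N) (Fin N) ℝ)
    (hCS : ∀ k l : Fin N, ∀ v ∈ Vs k.succ, ∀ w ∈ Vs l.succ,
      ⟪v, w⟫ ≤ ε k l * ‖v‖ * ‖w‖) :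
    ∀ u : V, ‖∑ k, S k u‖ ≤
      2 * M / α * (1 + ‖Matrix.toEuclideanCLM (𝕜 := ℝ) ε‖) * ‖u‖ := by
  intro u
  set A := Matrix.toEuclideanCLM (𝕜 := ℝ) ε
  have hS : ∀ k, a_h (S k u) (S k u) = a_h u (S k u) := fun k => hSdef k u _ (hSmem k u)
  have hcoarse : ‖S 0 u‖ ≤ M * ‖u‖ / α := norm_le_of_apply_self_eq hM.le hα hbound hcoerc (hS 0)
  have hlocal : ‖∑ k : Fin N, S k.succ u‖ ≤ ‖A‖ * (M * ‖u‖) / α :=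
    norm_sum_le_of_apply_self_eq_of_inner_le hM.le hα hbound hcoerc (fun k => hS k.succ) ε
      fun k l => hCS k l _ (hSmem _ u) _ (hSmem _ u)
  calc ‖∑ k, S k u‖ = ‖S 0 u + ∑ k : Fin N, S k.succ u‖ := by rw [Fin.sum_univ_succ]
    _ ≤ M * ‖u‖ / α + ‖A‖ * (M * ‖u‖) / α := norm_add_le_of_le hcoarse hlocal
    _ = M / α * (1 + ‖A‖) * ‖u‖ := by ring
    _ ≤ 2 * M / α * (1 + ‖A‖) * ‖u‖ := by
        rw [mul_div_assoc, mul_assoc 2, mul_assoc 2]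
        exact le_mul_of_one_le_left (by positivity) one_le_two

/-- The nonsymmetric additive Schwarz operator `S = ∑_{k=0}^N S_k`, where
`a_h(S_k u, v) = a_h(u, v)` for all `v ∈ V_k`, satisfies `‖Su‖_a ≤ γ₂ ‖u‖_a` with
`γ₂ = (2M/α)(1 + ρ(ℰ))` (spectral radius of the symmetric Cauchy–Schwarz matrix `ℰ`,
which equals its Euclidean operator norm). -/
theorem stmt7 {V : Type*} [NormedAddCommGroup V] [InnerProductSpace ℝ V]
    [FiniteDimensional ℝ V]
    (N : ℕ) (Vs : Fin (N + 1) → Submodule ℝ V)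
    (a_h : V →ₗ[ℝ] V →ₗ[ℝ] ℝ) (M α : ℝ) (hM : 0 < M) (hα : 0 < α)
    (hbound : ∀ u v : V, |a_h u v| ≤ M * ‖u‖ * ‖v‖)
    (hcoerc : ∀ u : V, α * ‖u‖ ^ 2 ≤ a_h u u)
    (S : Fin (N + 1) → V →ₗ[ℝ] V)
    (hSmem : ∀ k u, S k u ∈ Vs k)
    (hSdef : ∀ k u, ∀ v ∈ Vs k, a_h (S k u) v = a_h u v)
    (ε : Matrix (Fin N) (Fin N) ℝ) (hεsymm : ε.IsSymm) (hεnonneg : ∀ k l, 0 ≤ ε k l)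
    (hCS : ∀ k l : Fin N, ∀ v ∈ Vs k.succ, ∀ w ∈ Vs l.succ,
      ⟪v, w⟫ ≤ ε k l * ‖v‖ * ‖w‖) :
    ∀ u : V, ‖∑ k, S k u‖ ≤
      2 * M / α * (1 + ‖Matrix.toEuclideanCLM (𝕜 := ℝ) ε‖) * ‖u‖ :=
  stmt7_general N Vs a_h M α hM hα hbound hcoerc S hSmem hSdef ε hCS
end

section
/- Under the stated assumptions, α ∑_{k=0}^N a(S_k u, S_k u) ≤ a_h(u, Su) ≤ M ‖u‖_a ‖Su‖_a for every u ∈ V^h. -/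
open scoped RealInnerProductSpace

/-- With `S_k : V → V_k` defined by `a_h(S_k u, v) = a_h(u,v)` for
`v ∈ V_k`, and `S = ∑_k S_k`, one has
`α ∑_{k=0}^N a(S_k u, S_k u) ≤ a_h(u, Su) ≤ M ‖u‖_a ‖Su‖_a`. -/
theorem stmt8 {V : Type*} [NormedAddCommGroup V] [InnerProductSpace ℝ V]
    [FiniteDimensional ℝ V]
    (N : ℕ) (Vs : Fin (N + 1) → Submodule ℝ V)
    (a_h : V →ₗ[ℝ] V →ₗ[ℝ] ℝ) (M α : ℝ) (hM : 0 < M) (hα : 0 < α)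
    (hbound : ∀ u v : V, |a_h u v| ≤ M * ‖u‖ * ‖v‖)
    (hcoerc : ∀ u : V, α * ‖u‖ ^ 2 ≤ a_h u u)
    (S : Fin (N + 1) → V →ₗ[ℝ] V)
    (hSmem : ∀ k u, S k u ∈ Vs k)
    (hSdef : ∀ k u, ∀ v ∈ Vs k, a_h (S k u) v = a_h u v) :
    ∀ u : V, α * (∑ k, ⟪S k u, S k u⟫) ≤ a_h u (∑ k, S k u) ∧
      a_h u (∑ k, S k u) ≤ M * ‖u‖ * ‖∑ k, S k u‖ := by
  intro u
  constructor
  · have h1 : a_h u (∑ k, S k u) = ∑ k, a_h (S k u) (S k u) := by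
      rw [map_sum]
      exact Finset.sum_congr rfl fun k _ => (hSdef k u (S k u) (hSmem k u)).symm
    rw [h1, Finset.mul_sum]
    apply Finset.sum_le_sum
    intro k _
    have := hcoerc (S k u)
    rw [← real_inner_self_eq_norm_sq] at this
    exact this
  · exact le_trans (le_abs_self _) (hbound u _)
end

section
/- Under the stated assumptions, a(Su, u) ≥ γ_1 a(u,u) for all u ∈ V^h, where γ_1 = α³/(M² C_0²) − γ_2 C_E h and γ_2 = (2M/α)(1+ρ(ℰ)). -/
open scoped RealInnerProductSpace

/-- Under the assumptions (perturbation bound, boundedness and coercivity of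
`a_h`, stable splitting with constant `C₀`, strengthened Cauchy–Schwarz with spectral
radius `ρ(ℰ)`, and the upper bound `‖Su‖ ≤ γ₂‖u‖`), the nonsymmetric additive Schwarz
operator `S = ∑_{k=0}^N S_k` satisfies `a(Su, u) ≥ γ₁ a(u,u)` with
`γ₁ = α³/(M² C₀²) − γ₂ C_E h` and `γ₂ = (2M/α)(1+ρ(ℰ))`. -/
theorem stmt9 {V : Type*} [NormedAddCommGroup V] [InnerProductSpace ℝ V]
    [FiniteDimensional ℝ V]
    (N : ℕ) (Vs : Fin (N + 1) → Submodule ℝ V)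
    (a_h : V →ₗ[ℝ] V →ₗ[ℝ] ℝ)
    (h C_E M α C₀ ρ : ℝ) (hh : 0 < h) (hCE : 0 < C_E) (hM : 0 < M)
    (hα0 : 0 < α) (hα1 : α < 1) (hC₀ : 0 < C₀) (hρ : 0 ≤ ρ)
    (hE : ∀ u v : V, |a_h u v - ⟪u, v⟫| ≤ C_E * h * ‖u‖ * ‖v‖)
    (hbound : ∀ u v : V, |a_h u v| ≤ M * ‖u‖ * ‖v‖)
    (hcoerc : ∀ u : V, α * ‖u‖ ^ 2 ≤ a_h u u)
    (hsplit : ∀ u : V, ∃ w : Fin (N + 1) → V, (∀ k, w k ∈ Vs k) ∧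
      u = ∑ k, w k ∧ (∑ k, ⟪w k, w k⟫) ≤ C₀ ^ 2 * ⟪u, u⟫)
    (S : Fin (N + 1) → V →ₗ[ℝ] V)
    (hSmem : ∀ k u, S k u ∈ Vs k)
    (hSdef : ∀ k u, ∀ v ∈ Vs k, a_h (S k u) v = a_h u v)
    (hSnorm : ∀ u : V, ‖∑ k, S k u‖ ≤ 2 * M / α * (1 + ρ) * ‖u‖) :
    ∀ u : V, (α ^ 3 / (M ^ 2 * C₀ ^ 2) - 2 * M / α * (1 + ρ) * C_E * h) * ⟪u, u⟫ ≤
      ⟪∑ k, S k u, u⟫ := by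
  intro u
  rcases eq_or_ne u 0 with rfl | hu
  · simp
  set T : V := ∑ k, S k u with hTdef
  set s : ℝ := ∑ k, ‖S k u‖ ^ 2 with hsdef
  have hnu : (0 : ℝ) < ‖u‖ := norm_pos_iff.mpr hu
  have hinner : ⟪u, u⟫ = ‖u‖ ^ 2 := real_inner_self_eq_norm_sq u
  -- Step 1 : α * s ≤ a_h u T
  have h1 : α * s ≤ a_h u T := by
    have key : ∀ k : Fin (N + 1), α * ‖S k u‖ ^ 2 ≤ a_h u (S k u) := fun k => by
      calc α * ‖S k u‖ ^ 2 ≤ a_h (S k u) (S k u) := hcoerc _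
        _ = a_h u (S k u) := hSdef k u _ (hSmem k u)
    calc α * s = ∑ k, α * ‖S k u‖ ^ 2 := Finset.mul_sum _ _ _
      _ ≤ ∑ k, a_h u (S k u) := Finset.sum_le_sum fun k _ => key k
      _ = a_h u T := (map_sum (a_h u) (fun k => S k u) Finset.univ).symm
  -- Step 2 : α^2 * ‖u‖^2 ≤ M^2 * C₀^2 * s
  obtain ⟨w, hwmem, hwsum, hwbound⟩ := hsplit u
  have hwb : (∑ k, ‖w k‖ ^ 2) ≤ C₀ ^ 2 * ‖u‖ ^ 2 := by
    have : (∑ k, ⟪w k, w k⟫) = ∑ k, ‖w k‖ ^ 2 := by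
      simp [real_inner_self_eq_norm_sq]
    rw [← this]
    rw [hinner] at hwbound
    exact hwbound
  have haub : a_h u u ≤ M * ∑ k, ‖S k u‖ * ‖w k‖ := by
    have e1 : a_h u u = ∑ k, a_h (S k u) (w k) := by
      conv_lhs => rw [show (a_h u) u = (a_h u) u from rfl]
      nth_rewrite 2 [hwsum]
      rw [map_sum (a_h u) w Finset.univ]
      exact Finset.sum_congr rfl fun k _ => (hSdef k u (w k) (hwmem k)).symm
    rw [e1, Finset.mul_sum]
    refine Finset.sum_le_sum fun k _ => ?_
    calc a_h (S k u) (w k) ≤ |a_h (S k u) (w k)| := le_abs_self _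
      _ ≤ M * ‖S k u‖ * ‖w k‖ := hbound _ _
      _ = M * (‖S k u‖ * ‖w k‖) := by ring
  have hcs : (∑ k, ‖S k u‖ * ‖w k‖) ^ 2 ≤ s * ∑ k, ‖w k‖ ^ 2 :=
    Finset.sum_mul_sq_le_sq_mul_sq _ _ _
  have hau : α * ‖u‖ ^ 2 ≤ a_h u u := hcoerc u
  have hau0 : 0 ≤ a_h u u := le_trans (by positivity) hau
  have hs0 : 0 ≤ s := Finset.sum_nonneg fun k _ => sq_nonneg _
  have h2 : α ^ 2 * ‖u‖ ^ 2 ≤ M ^ 2 * C₀ ^ 2 * s := by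
    have hsq : (α * ‖u‖ ^ 2) ^ 2 ≤ (M * ∑ k, ‖S k u‖ * ‖w k‖) ^ 2 := by
      apply pow_le_pow_left₀ (by positivity) (le_trans hau haub)
    have hsum0 : 0 ≤ ∑ k, ‖S k u‖ * ‖w k‖ :=
      Finset.sum_nonneg fun k _ => mul_nonneg (norm_nonneg _) (norm_nonneg _)
    have key : (α * ‖u‖ ^ 2) ^ 2 ≤ M ^ 2 * (s * (C₀ ^ 2 * ‖u‖ ^ 2)) := by
      calc (α * ‖u‖ ^ 2) ^ 2 ≤ (M * ∑ k, ‖S k u‖ * ‖w k‖) ^ 2 := hsq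
        _ = M ^ 2 * (∑ k, ‖S k u‖ * ‖w k‖) ^ 2 := by ring
        _ ≤ M ^ 2 * (s * ∑ k, ‖w k‖ ^ 2) := by
            exact mul_le_mul_of_nonneg_left hcs (by positivity)
        _ ≤ M ^ 2 * (s * (C₀ ^ 2 * ‖u‖ ^ 2)) := by
            exact mul_le_mul_of_nonneg_left
              (mul_le_mul_of_nonneg_left hwb hs0) (by positivity)
    have hnu2 : (0 : ℝ) < ‖u‖ ^ 2 := by positivity
    nlinarith [key, hnu2]
  -- Step 3 : combine
  have h3 : a_h u T - C_E * h * ‖u‖ * ‖T‖ ≤ ⟪T, u⟫ := by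
    rw [real_inner_comm]
    have := (abs_le.mp (hE u T)).2
    linarith
  have hTn : ‖T‖ ≤ 2 * M / α * (1 + ρ) * ‖u‖ := hSnorm u
  have h4 : C_E * h * ‖u‖ * ‖T‖ ≤ 2 * M / α * (1 + ρ) * C_E * h * ‖u‖ ^ 2 := by
    have : C_E * h * ‖u‖ * ‖T‖ ≤ C_E * h * ‖u‖ * (2 * M / α * (1 + ρ) * ‖u‖) :=
      mul_le_mul_of_nonneg_left hTn (by positivity)
    calc C_E * h * ‖u‖ * ‖T‖ ≤ C_E * h * ‖u‖ * (2 * M / α * (1 + ρ) * ‖u‖) := this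
      _ = 2 * M / α * (1 + ρ) * C_E * h * ‖u‖ ^ 2 := by ring
  have h5 : α ^ 3 / (M ^ 2 * C₀ ^ 2) * ‖u‖ ^ 2 ≤ α * s := by
    have hMC : (0 : ℝ) < M ^ 2 * C₀ ^ 2 := by positivity
    rw [div_mul_eq_mul_div, div_le_iff₀ hMC]
    calc α ^ 3 * ‖u‖ ^ 2 = α * (α ^ 2 * ‖u‖ ^ 2) := by ring
      _ ≤ α * (M ^ 2 * C₀ ^ 2 * s) := mul_le_mul_of_nonneg_left h2 hα0.le
      _ = α * s * (M ^ 2 * C₀ ^ 2) := by ring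
  rw [hinner]
  calc (α ^ 3 / (M ^ 2 * C₀ ^ 2) - 2 * M / α * (1 + ρ) * C_E * h) * ‖u‖ ^ 2
      = α ^ 3 / (M ^ 2 * C₀ ^ 2) * ‖u‖ ^ 2
        - 2 * M / α * (1 + ρ) * C_E * h * ‖u‖ ^ 2 := by ring
    _ ≤ α * s - C_E * h * ‖u‖ * ‖T‖ := by linarith
    _ ≤ a_h u T - C_E * h * ‖u‖ * ‖T‖ := by linarith
    _ ≤ ⟪T, u⟫ := h3
end

section
/- If the symmetric part of T satisfies a(Tu,u) ≥ β_1 ‖u‖_a² with β_1 > 0 and ‖Tu‖_a ≤ β_2 ‖u‖_a for all u, then the GMRES residual in the a-norm satisfies ‖g − T u_m‖_a ≤ (1 − β_1²/β_2²)^{m/2} ‖g − T u_0‖_a, where u_m is the m-th GMRES iterate for the system Tu = g. -/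
open scoped RealInnerProductSpace

/-- Eisenstat–Elman–Schultz: If `a(Tu,u) ≥ β₁‖u‖²` with `β₁ > 0` and
`‖Tu‖ ≤ β₂‖u‖`, then the `m`-th GMRES iterate `u_m` (which minimizes the `a`-norm of the
residual `g − Tu` over the affine Krylov space
`u₀ + span{r₀, Tr₀, …, T^{m−1} r₀}`, `r₀ = g − Tu₀`) satisfies
`‖g − T u_m‖ ≤ (1 − β₁²/β₂²)^{m/2} ‖g − T u₀‖`. -/
theorem stmt10 {V : Type*} [NormedAddCommGroup V] [InnerProductSpace ℝ V]
    [FiniteDimensional ℝ V]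
    (T : V →ₗ[ℝ] V) (β₁ β₂ : ℝ) (hβ₁pos : 0 < β₁)
    (hβ₁ : ∀ u : V, β₁ * ‖u‖ ^ 2 ≤ ⟪T u, u⟫)
    (hβ₂ : ∀ u : V, ‖T u‖ ≤ β₂ * ‖u‖)
    (g u₀ : V) (m : ℕ) (uₘ : V)
    (huₘmem : uₘ - u₀ ∈
      Submodule.span ℝ {w : V | ∃ i < m, w = (T ^ i) (g - T u₀)})
    (huₘmin : ∀ w ∈ Submodule.span ℝ {w : V | ∃ i < m, w = (T ^ i) (g - T u₀)},
      ‖g - T uₘ‖ ≤ ‖g - T (u₀ + w)‖) :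
    ‖g - T uₘ‖ ≤ (1 - β₁ ^ 2 / β₂ ^ 2) ^ ((m : ℝ) / 2) * ‖g - T u₀‖ := by
  rcases subsingleton_or_nontrivial V with hV | hV
  · have h1 : g - T uₘ = 0 := Subsingleton.elim _ _
    have h2 : g - T u₀ = 0 := Subsingleton.elim _ _
    rw [h1, h2]
    simp
  obtain ⟨u, hu⟩ := exists_ne (0 : V)
  have hβ12 : β₁ ≤ β₂ := by
    have h1 := hβ₁ u
    have h2 : ⟪T u, u⟫ ≤ ‖T u‖ * ‖u‖ := real_inner_le_norm _ _
    have h3 := hβ₂ u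
    have hn : 0 < ‖u‖ := norm_pos_iff.mpr hu
    have h4 : ‖T u‖ * ‖u‖ ≤ β₂ * ‖u‖ * ‖u‖ :=
      mul_le_mul_of_nonneg_right h3 hn.le
    nlinarith [mul_pos hn hn]
  have hβ₂pos : 0 < β₂ := lt_of_lt_of_le hβ₁pos hβ12
  set c : ℝ := 1 - β₁ ^ 2 / β₂ ^ 2 with hc
  have hc0 : 0 ≤ c := by
    have h1 : β₁ ^ 2 ≤ β₂ ^ 2 := by nlinarith
    have h2 : β₁ ^ 2 / β₂ ^ 2 ≤ 1 := by
      rw [div_le_one (by positivity)]; exact h1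
    rw [hc]; linarith
  set r₀ : V := g - T u₀ with hr₀
  -- key one-step estimate
  have key : ∀ x : V,
      ‖x - (⟪T x, x⟫ / ‖T x‖ ^ 2) • T x‖ ^ 2 ≤ c * ‖x‖ ^ 2 := by
    intro x
    rcases eq_or_ne x 0 with rfl | hx
    · simp
    · have hnx : 0 < ‖x‖ := norm_pos_iff.mpr hx
      have hip : β₁ * ‖x‖ ^ 2 ≤ ⟪T x, x⟫ := hβ₁ x
      have hippos : 0 < ⟪T x, x⟫ := lt_of_lt_of_le (by positivity) hip
      have hTx : T x ≠ 0 := by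
        intro h
        rw [show ⟪T x, x⟫ = 0 by rw [h]; simp] at hippos
        exact lt_irrefl 0 hippos
      have hnTx : 0 < ‖T x‖ := norm_pos_iff.mpr hTx
      set α : ℝ := ⟪T x, x⟫ / ‖T x‖ ^ 2 with hα
      have hexpand : ‖x - α • T x‖ ^ 2
          = ‖x‖ ^ 2 - ⟪T x, x⟫ ^ 2 / ‖T x‖ ^ 2 := by
        rw [norm_sub_sq_real]
        rw [real_inner_smul_right, real_inner_comm, norm_smul,
          Real.norm_eq_abs, mul_pow, sq_abs, hα]
        field_simp
        ring
      rw [hexpand]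
      have hTxle : ‖T x‖ ≤ β₂ * ‖x‖ := hβ₂ x
      have hfrac : β₁ ^ 2 / β₂ ^ 2 * ‖x‖ ^ 2 ≤ ⟪T x, x⟫ ^ 2 / ‖T x‖ ^ 2 := by
        rw [div_mul_eq_mul_div, div_le_div_iff₀ (by positivity) (by positivity)]
        have hp2 : (β₁ * ‖x‖ ^ 2) ^ 2 ≤ ⟪T x, x⟫ ^ 2 :=
          pow_le_pow_left₀ (by positivity) hip 2
        have hT2 : ‖T x‖ ^ 2 ≤ (β₂ * ‖x‖) ^ 2 :=
          pow_le_pow_left₀ (norm_nonneg _) hTxle 2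
        nlinarith [mul_le_mul_of_nonneg_left hT2
            (by positivity : (0:ℝ) ≤ β₁ ^ 2 * ‖x‖ ^ 2),
          mul_le_mul_of_nonneg_right hp2 (sq_nonneg β₂)]
      rw [hc]
      nlinarith
  -- the recursive residual sequence
  let rseq : ℕ → V := fun k =>
    Nat.rec r₀ (fun _ rk => rk - (⟪T rk, rk⟫ / ‖T rk‖ ^ 2) • T rk) k
  have hrseq0 : rseq 0 = r₀ := rfl
  have hrseqS : ∀ k, rseq (k + 1)
      = rseq k - (⟪T (rseq k), rseq k⟫ / ‖T (rseq k)‖ ^ 2) • T (rseq k) :=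
    fun k => rfl
  -- norm decay
  have hdecay : ∀ k, ‖rseq k‖ ^ 2 ≤ c ^ k * ‖r₀‖ ^ 2 := by
    intro k
    induction k with
    | zero => simp [hrseq0]
    | succ n ih =>
      calc ‖rseq (n + 1)‖ ^ 2 ≤ c * ‖rseq n‖ ^ 2 := by
            rw [hrseqS]; exact key (rseq n)
        _ ≤ c * (c ^ n * ‖r₀‖ ^ 2) := by
            exact mul_le_mul_of_nonneg_left ih hc0
        _ = c ^ (n + 1) * ‖r₀‖ ^ 2 := by ring
  -- representation in Krylov space
  have hrep : ∀ k, ∃ w ∈ Submodule.span ℝ {w : V | ∃ i < k, w = (T ^ i) r₀},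
      rseq k = r₀ - T w := by
    intro k
    induction k with
    | zero =>
      exact ⟨0, Submodule.zero_mem _, by simp [hrseq0]⟩
    | succ n ih =>
      obtain ⟨w, hw, hwe⟩ := ih
      set α : ℝ := ⟪T (rseq n), rseq n⟫ / ‖T (rseq n)‖ ^ 2 with hα
      refine ⟨w + α • (r₀ - T w), ?_, ?_⟩
      · have hmono : Submodule.span ℝ {w : V | ∃ i < n, w = (T ^ i) r₀}
            ≤ Submodule.span ℝ {w : V | ∃ i < n + 1, w = (T ^ i) r₀} := by
          apply Submodule.span_mono
          rintro x ⟨i, hi, rfl⟩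
          exact ⟨i, Nat.lt_succ_of_lt hi, rfl⟩
        have hw' : w ∈ Submodule.span ℝ {w : V | ∃ i < n + 1, w = (T ^ i) r₀} :=
          hmono hw
        have hr₀mem : r₀ ∈ Submodule.span ℝ {w : V | ∃ i < n + 1, w = (T ^ i) r₀} :=
          Submodule.subset_span ⟨0, Nat.succ_pos n, by simp⟩
        have hTw : T w ∈ Submodule.span ℝ {w : V | ∃ i < n + 1, w = (T ^ i) r₀} := by
          have : T w ∈ Submodule.map T
              (Submodule.span ℝ {w : V | ∃ i < n, w = (T ^ i) r₀}) :=
            Submodule.mem_map_of_mem hw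
          rw [Submodule.map_span] at this
          refine Submodule.span_mono ?_ this
          rintro x ⟨y, ⟨i, hi, rfl⟩, rfl⟩
          refine ⟨i + 1, Nat.succ_lt_succ hi, ?_⟩
          rw [pow_succ', Module.End.mul_apply]
        exact Submodule.add_mem _ hw'
          (Submodule.smul_mem _ α (Submodule.sub_mem _ hr₀mem hTw))
      · rw [hrseqS, hwe, hα, hwe]
        simp only [map_add, map_smul]
        abel
  -- finish
  obtain ⟨w, hw, hwe⟩ := hrep m
  have h1 : ‖g - T uₘ‖ ≤ ‖rseq m‖ := by
    have := huₘmin w hw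
    have he : g - T (u₀ + w) = r₀ - T w := by
      rw [hr₀]; simp only [map_add]; abel
    rw [he, ← hwe] at this
    exact this
  have h2 : ‖rseq m‖ ≤ c ^ ((m : ℝ) / 2) * ‖r₀‖ := by
    have hsq := hdecay m
    have hnn : (0:ℝ) ≤ ‖rseq m‖ := norm_nonneg _
    have hs : ‖rseq m‖ = Real.sqrt (‖rseq m‖ ^ 2) := by
      rw [Real.sqrt_sq hnn]
    rw [hs]
    calc Real.sqrt (‖rseq m‖ ^ 2) ≤ Real.sqrt (c ^ m * ‖r₀‖ ^ 2) :=
          Real.sqrt_le_sqrt hsq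
      _ = Real.sqrt (c ^ m) * Real.sqrt (‖r₀‖ ^ 2) := by
          rw [Real.sqrt_mul (by positivity)]
      _ = c ^ ((m : ℝ) / 2) * ‖r₀‖ := by
          rw [Real.sqrt_sq (norm_nonneg _)]
          congr 1
          rw [Real.sqrt_eq_rpow, ← Real.rpow_natCast c m,
            ← Real.rpow_mul hc0, mul_one_div]
  calc ‖g - T uₘ‖ ≤ ‖rseq m‖ := h1
    _ ≤ c ^ ((m : ℝ) / 2) * ‖r₀‖ := h2
end

section
/- For u ∈ V_0 and an arbitrary constant C, |u|_{H¹(Ω_k)}² ≲ ∑_{x ∈ 𝒱_k} |u(x) − C|², with the implicit constant independent of h, H_k, and u. -/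
/-!
Subtracting the constant `Cst` does not change the seminorm, and since the `φ x` form a partition
of unity, `u - Cst = ∑ x, (u (p x) - Cst) • φ x`. The triangle inequality bounds the seminorm of
this by `c ∑ x, |u (p x) - Cst|`, and by Cauchy–Schwarz the square of this `ℓ¹` sum is at most
`n` times the `ℓ²` sum of squares.
-/

open Finset

namespace Seminorm

variable {E ι : Type*} [AddCommGroup E] [Module ℝ E] [Fintype ι]

theorem apply_sum_smul_le (q : Seminorm ℝ E) {c : ℝ} {v : ι → E} (hv : ∀ i, q (v i) ≤ c)
    (a : ι → ℝ) : q (∑ i, a i • v i) ≤ c * ∑ i, |a i| := by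
  calc q (∑ i, a i • v i) ≤ ∑ i, q (a i • v i) :=
        le_sum_of_subadditive q (map_zero q).le (map_add_le_add q) _ _
    _ = ∑ i, |a i| * q (v i) := by simp only [map_smul_eq_mul, Real.norm_eq_abs]
    _ ≤ ∑ i, |a i| * c := by gcongr with i; exact hv i
    _ = c * ∑ i, |a i| := by rw [← sum_mul, mul_comm]

theorem apply_sum_smul_sq_le (q : Seminorm ℝ E) {c : ℝ} {v : ι → E} (hv : ∀ i, q (v i) ≤ c)
    (a : ι → ℝ) : q (∑ i, a i • v i) ^ 2 ≤ c ^ 2 * Fintype.card ι * ∑ i, a i ^ 2 := by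
  have cauchy_schwarz : (∑ i, |a i|) ^ 2 ≤ Fintype.card ι * ∑ i, a i ^ 2 := by
    simpa only [sq_abs, card_univ] using sq_sum_le_card_mul_sum_sq (s := univ) (f := fun i ↦ |a i|)
  calc q (∑ i, a i • v i) ^ 2 ≤ (c * ∑ i, |a i|) ^ 2 :=
        pow_le_pow_left₀ (apply_nonneg q _) (apply_sum_smul_le q hv a) 2
    _ = c ^ 2 * (∑ i, |a i|) ^ 2 := mul_pow _ _ _
    _ ≤ c ^ 2 * (Fintype.card ι * ∑ i, a i ^ 2) := by gcongr
    _ = c ^ 2 * Fintype.card ι * ∑ i, a i ^ 2 := (mul_assoc _ _ _).symm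

theorem apply_le_apply_sub_of_apply_eq_zero (q : Seminorm ℝ E) {x z : E} (hz : q z = 0) :
    q x ≤ q (x - z) := by
  simpa [hz] using map_add_le_add q (x - z) z

end Seminorm

theorem sum_sub_smul_of_sum_eq_one {X ι : Type*} [Fintype ι] {φ : ι → X → ℝ}
    (hφ : ∑ i, φ i = fun _ ↦ 1) (a : ι → ℝ) (k : ℝ) :
    ∑ i, (a i - k) • φ i = ∑ i, a i • φ i - fun _ ↦ k := by
  simp only [sub_smul, sum_sub_distrib, ← smul_sum, hφ]
  ext; simp

/-- For `u ∈ V₀` (the coarse space spanned by discrete harmonic nodal basis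
functions `φ_x`, `x ∈ 𝒱_k`, with `|φ_x|_{H¹(Ω_k)} ≤ c` and `∑_x φ_x = 1` on `Ω_k`) and an
arbitrary constant `Cst`, one has `|u|²_{H¹(Ω_k)} ≤ C ∑_{x∈𝒱_k} |u(x) − Cst|²`, with `C`
depending only on the shape-regularity constants `c` and the bound `n` on the number of
vertices of `Ω_k`, and in particular independent of `h`, `H_k` and `u`.
Here `s` is the `H¹(Ω_k)` seminorm (subadditive, absolutely homogeneous, vanishing on
constants), `p x` is the vertex point associated with `x ∈ 𝒱_k`. -/
theorem stmt12 (c : ℝ) (hc : 0 < c) (n : ℕ) :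
    ∃ C : ℝ, 0 < C ∧
      ∀ (X ι : Type) (_ : Fintype ι), Fintype.card ι ≤ n →
      ∀ s : (X → ℝ) → ℝ,
        (∀ f g : X → ℝ, s (f + g) ≤ s f + s g) →
        (∀ (r : ℝ) (f : X → ℝ), s (r • f) = |r| * s f) →
        (∀ r : ℝ, s (fun _ => r) = 0) →
      ∀ (φ : ι → X → ℝ) (p : ι → X),
        (∀ x, s (φ x) ≤ c) →
        (∑ x, φ x) = (fun _ => (1 : ℝ)) →
      ∀ u : X → ℝ, u = (∑ x, u (p x) • φ x) →
      ∀ Cst : ℝ, s u ^ 2 ≤ C * ∑ x, (u (p x) - Cst) ^ 2 := by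
  refine ⟨c ^ 2 * (n + 1), by positivity, ?_⟩
  intro X ι _ hcard s hadd hsmul hconst φ p hφ hpart u hu Cst
  let q : Seminorm ℝ (X → ℝ) := Seminorm.of s hadd (by simpa only [Real.norm_eq_abs] using hsmul)
  have hcard' : (Fintype.card ι : ℝ) ≤ n + 1 := by exact_mod_cast hcard.trans n.le_succ
  calc s u ^ 2 ≤ q (∑ x, (u (p x) - Cst) • φ x) ^ 2 := by
        rw [sum_sub_smul_of_sum_eq_one hpart, ← hu]
        gcongr
        · exact apply_nonneg q u
        · exact q.apply_le_apply_sub_of_apply_eq_zero (hconst Cst)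
    _ ≤ c ^ 2 * Fintype.card ι * ∑ x, (u (p x) - Cst) ^ 2 := q.apply_sum_smul_sq_le hφ _
    _ ≤ c ^ 2 * (n + 1) * ∑ x, (u (p x) - Cst) ^ 2 := by gcongr
end

section
/- For any u in the P1 finite element space V_h, the coarse interpolant I_H u satisfies |I_H u|_{H¹(Ω_k)}² ≲ (1 + log(H_k/h)) |u|_{H¹(Ω_k)}². -/
/-- For any `u ∈ V_h`, the coarse interpolant `I_H u` satisfies
`|I_H u|²_{H¹(Ω_k)} ≤ C (1 + log(H_k/h)) |u|²_{H¹(Ω_k)}`, with `C` depending only on the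
constants `c₁, c₂, c₃` of the available tools (the coarse-space estimate via vertex
values, the discrete Sobolev inequality, the quotient/Poincaré argument) and on the bound
`n` on the number of vertices `𝒱_k` of the subdomain, in particular independent of `h`,
`H_k` and `u`. Here `V` plays the role of `V_h` restricted to `Ω_k`, `sH1`, `sL2`,
`sLinf` are the `H¹(Ω_k)` seminorm, `L²(Ω_k)` norm and `L^∞(Ω_k)` norm, `one` is the
constant function 1, `eval x` is evaluation at the vertex `x ∈ 𝒱_k`, and `IH` the coarse
interpolant. -/
theorem stmt13 (c₁ c₂ c₃ : ℝ) (hc₁ : 0 < c₁) (hc₂ : 0 < c₂) (hc₃ : 0 < c₃) (n : ℕ) :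
    ∃ C : ℝ, 0 < C ∧
      ∀ (V : Type) (_ : AddCommGroup V) (_ : Module ℝ V)
        (sH1 sL2 sLinf : V → ℝ) (one : V) (IH : V →ₗ[ℝ] V)
        (ι : Type) (_ : Fintype ι) (eval : ι → V → ℝ)
        (h H : ℝ), 0 < h → h ≤ H → Fintype.card ι ≤ n →
        -- Lemma 6.5 combined with `(I_H u)(x) = u(x)` at the vertices:
        (∀ (u : V) (Cst : ℝ), sH1 (IH u) ^ 2 ≤ c₁ * ∑ x, (eval x u - Cst) ^ 2) →
        -- vertex values are dominated by the `L^∞` norm (after subtracting a constant):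
        (∀ (v : V) (Cst : ℝ) (x : ι), |eval x v - Cst| ≤ sLinf (v - Cst • one)) →
        -- discrete Sobolev inequality:
        (∀ v : V, sLinf v ^ 2 ≤
          c₂ * (1 + Real.log (H / h)) * ((H ^ 2)⁻¹ * sL2 v ^ 2 + sH1 v ^ 2)) →
        -- the `H¹` seminorm is invariant under subtracting constants:
        (∀ (v : V) (Cst : ℝ), sH1 (v - Cst • one) = sH1 v) →
        -- quotient space (Poincaré) and scaling argument:
        (∀ v : V, ∃ Cst : ℝ, (H ^ 2)⁻¹ * sL2 (v - Cst • one) ^ 2 ≤ c₃ * sH1 v ^ 2) →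
        ∀ u : V, sH1 (IH u) ^ 2 ≤ C * (1 + Real.log (H / h)) * sH1 u ^ 2 := by
  refine ⟨c₁ * (n + 1) * c₂ * (c₃ + 1), by positivity, ?_⟩
  intro V _ _ sH1 sL2 sLinf one IH ι _ eval h H hh hhH hcard h1 h2 h3 h4 h5 u
  obtain ⟨Cst, hCst⟩ := h5 u
  have hlog : 0 ≤ Real.log (H / h) := Real.log_nonneg (by
    rw [le_div_iff₀ hh]; linarith)
  have hL : 0 < 1 + Real.log (H / h) := by linarith
  -- step 1
  have step1 : sH1 (IH u) ^ 2 ≤ c₁ * ∑ x, (eval x u - Cst) ^ 2 := h1 u Cst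
  -- each term bounded by sLinf squared
  have step2 : ∑ x, (eval x u - Cst) ^ 2 ≤ (n : ℝ) * sLinf (u - Cst • one) ^ 2 := by
    calc ∑ x, (eval x u - Cst) ^ 2
        ≤ ∑ _x : ι, sLinf (u - Cst • one) ^ 2 := by
          apply Finset.sum_le_sum
          intro x _
          have := h2 u Cst x
          have := abs_nonneg (eval x u - Cst)
          nlinarith [sq_abs (eval x u - Cst)]
      _ = (Fintype.card ι : ℝ) * sLinf (u - Cst • one) ^ 2 := by
          rw [Finset.sum_const, Finset.card_univ, nsmul_eq_mul]
      _ ≤ (n : ℝ) * sLinf (u - Cst • one) ^ 2 := by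
          apply mul_le_mul_of_nonneg_right _ (sq_nonneg _)
          exact_mod_cast hcard
  have step3 : sLinf (u - Cst • one) ^ 2 ≤
      c₂ * (1 + Real.log (H / h)) * ((c₃ + 1) * sH1 u ^ 2) := by
    have := h3 (u - Cst • one)
    rw [h4 u Cst] at this
    refine this.trans ?_
    apply mul_le_mul_of_nonneg_left _ (by positivity)
    nlinarith [sq_nonneg (sH1 u)]
  calc sH1 (IH u) ^ 2
      ≤ c₁ * ((n : ℝ) * sLinf (u - Cst • one) ^ 2) := by
        refine step1.trans (mul_le_mul_of_nonneg_left step2 hc₁.le)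
    _ ≤ c₁ * ((n : ℝ) * (c₂ * (1 + Real.log (H / h)) * ((c₃ + 1) * sH1 u ^ 2))) := by
        apply mul_le_mul_of_nonneg_left _ hc₁.le
        exact mul_le_mul_of_nonneg_left step3 (Nat.cast_nonneg n)
    _ ≤ c₁ * (n + 1) * c₂ * (c₃ + 1) * (1 + Real.log (H / h)) * sH1 u ^ 2 := by
        nlinarith [sq_nonneg (sH1 u), hL, Nat.cast_nonneg (α := ℝ) n, hc₂.le, hc₃.le, hc₁.le,
          mul_nonneg (mul_nonneg hc₂.le hL.le) (sq_nonneg (sH1 u))]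
end

section
/- Let Γ_{kl} ⊂ ∂Ω_k be a subdomain edge and define u_{kl} ∈ W_k by u_{kl} = u − I_H u on Γ_{kl} and u_{kl} = 0 on ∂Ω_k \ Γ_{kl}. Then ‖u_{kl}‖_{H^{1/2}_{00}(Γ_{kl})}² ≲ (1 + log(H_k/h))² |u|_{H¹(Ω_k)}². -/
/-- Let `Γ_{kl} ⊂ ∂Ω_k` be a subdomain edge and `u_{kl} ∈ W_k` be the
discrete harmonic function equal to `u − I_H u` on `Γ_{kl}` and `0` on
`∂Ω_k \ Γ_{kl}`. Then `‖u_{kl}‖²_{H^{1/2}_{00}(Γ_{kl})} ≤ C (1 + log(H_k/h))² |u|²_{H¹(Ω_k)}`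
with `C` depending only on the constants of the available lemmas (a)–(e), in particular
independent of `h`, `H_k` and `u`. Here `V` models `V_h(Ω_k)`, `VΓ` the space of traces
on `Γ_{kl}`, `R` the trace (restriction) map, `n00`, `s12`, `ninf` the
`H^{1/2}_{00}(Γ_{kl})` norm, `H^{1/2}(Γ_{kl})` seminorm and `L^∞(Γ_{kl})` norm, and
since `u_{kl}` is determined by its boundary data `R u − R (I_H u)`, its
`H^{1/2}_{00}` norm is `n00 (R u − R (IH u))`. -/
theorem stmt14 (c₁ c₂ c₃ c₄ c₅ : ℝ)
    (hc₁ : 0 < c₁) (hc₂ : 0 < c₂) (hc₃ : 0 < c₃) (hc₄ : 0 < c₄) (hc₅ : 0 < c₅) :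
    ∃ C : ℝ, 0 < C ∧
      ∀ (V VΓ : Type) (_ : AddCommGroup V) (_ : Module ℝ V)
        (_ : AddCommGroup VΓ) (_ : Module ℝ VΓ)
        (sH1 sL2 sLinf : V → ℝ) (one : V) (IH : V →ₗ[ℝ] V) (R : V →ₗ[ℝ] VΓ)
        (n00 s12 ninf : VΓ → ℝ)
        (h H : ℝ), 0 < h → h ≤ H →
        -- seminorm properties:
        (∀ v : V, 0 ≤ sH1 v) → (∀ g : VΓ, 0 ≤ s12 g) → (∀ g : VΓ, 0 ≤ ninf g) →
        (∀ g₁ g₂ : VΓ, s12 (g₁ - g₂) ≤ s12 g₁ + s12 g₂) →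
        (∀ g₁ g₂ : VΓ, ninf (g₁ - g₂) ≤ ninf g₁ + ninf g₂) →
        -- (a) `H^{1/2}_{00}` bound by `H^{1/2}` seminorm and `L^∞` norm on the edge:
        (∀ g : VΓ, n00 g ^ 2 ≤
          c₁ * (s12 g ^ 2 + (1 + Real.log (H / h)) * ninf g ^ 2)) →
        -- (c) trace theorem:
        (∀ v : V, s12 (R v) ^ 2 ≤ c₂ * sH1 v ^ 2) →
        -- (d) coarse interpolation estimate:
        (∀ v : V, sH1 (IH v) ^ 2 ≤ c₃ * (1 + Real.log (H / h)) * sH1 v ^ 2) →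
        -- (e) `I_H u` is linear on the edge: `‖I_H u‖_{L^∞(Γ)} ≤ ‖u‖_{L^∞(Γ)}`:
        (∀ v : V, ninf (R (IH v)) ≤ ninf (R v)) →
        -- `I_H` preserves constants:
        IH one = one →
        -- the sup on the edge is dominated by the sup on the subdomain:
        (∀ v : V, ninf (R v) ≤ sLinf v) →
        -- (b) discrete Sobolev inequality:
        (∀ v : V, sLinf v ^ 2 ≤
          c₄ * (1 + Real.log (H / h)) * ((H ^ 2)⁻¹ * sL2 v ^ 2 + sH1 v ^ 2)) →
        -- the `H¹` seminorm is invariant under subtracting constants: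
        (∀ (v : V) (Cst : ℝ), sH1 (v - Cst • one) = sH1 v) →
        -- quotient space (Poincaré) and scaling argument:
        (∀ v : V, ∃ Cst : ℝ, (H ^ 2)⁻¹ * sL2 (v - Cst • one) ^ 2 ≤ c₅ * sH1 v ^ 2) →
        ∀ u : V,
          n00 (R u - R (IH u)) ^ 2 ≤ C * (1 + Real.log (H / h)) ^ 2 * sH1 u ^ 2 := by

  refine ⟨c₁ * (2*c₂*(1+c₃) + 8*c₄*(c₅+1)), by positivity, ?_⟩
  intro V VΓ _ _ _ _ sH1 sL2 sLinf one IH R n00 s12 ninf h H hh hhH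
    hsH1 hs12 hninf hs12tri hninftri ha hc hd he hIHone hsup hb hinv hpoin u
  set L := 1 + Real.log (H/h) with hLdef
  have hL : 1 ≤ L := by
    have h0 : 0 ≤ Real.log (H/h) := Real.log_nonneg ((one_le_div hh).mpr hhH)
    rw [hLdef]; linarith
  clear_value L
  obtain ⟨Cst, hCst⟩ := hpoin u
  set w := u - Cst • one with hwdef
  have hIHw : IH w = IH u - Cst • one := by
    simp [hwdef, map_sub, map_smul, hIHone]
  have hdiff : R u - R (IH u) = R w - R (IH w) := by
    rw [hwdef, hIHw, map_sub, map_sub]; abel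
  have hsH1w : sH1 w = sH1 u := hinv u Cst
  have hsH1u : 0 ≤ sH1 u := hsH1 u
  clear_value w
  -- H^{1/2} seminorm bound
  have h1 : s12 (R w - R (IH w)) ^ 2 ≤ 2*c₂*sH1 u^2 + 2*c₂*c₃*L*sH1 u^2 := by
    have t := hs12tri (R w) (R (IH w))
    have a1 := hc w
    have a2 := hc (IH w)
    have a3 := hd w
    rw [hsH1w] at a1 a3
    have n1 := hs12 (R w)
    have n2 := hs12 (R (IH w))
    have n3 := hs12 (R w - R (IH w))
    nlinarith [sq_nonneg (s12 (R w) - s12 (R (IH w))), hsH1 (IH w), mul_pos hc₂ hc₃]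
  -- L^∞ bound
  have h2 : ninf (R w - R (IH w)) ^ 2 ≤ 8*c₄*(c₅+1)*L*sH1 u^2 := by
    have t := hninftri (R w) (R (IH w))
    have e1 := he w
    have s1 := hsup w
    have b1 := hb w
    rw [hsH1w] at b1
    have n1 := hninf (R w)
    have n3 := hninf (R w - R (IH w))
    have hCst' : (H ^ 2)⁻¹ * sL2 w ^ 2 ≤ c₅ * sH1 u ^ 2 := hCst
    have hLpos : (0:ℝ) < L := by linarith
    have hsw : 0 ≤ sLinf w := le_trans n1 s1
    have hnd : ninf (R w - R (IH w)) ≤ 2 * sLinf w := by linarith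
    have hsq : ninf (R w - R (IH w)) ^ 2 ≤ (2 * sLinf w) ^ 2 :=
      pow_le_pow_left₀ n3 hnd 2
    have b2 : sLinf w ^ 2 ≤ c₄ * L * (c₅ + 1) * sH1 u ^ 2 := by
      calc sLinf w ^ 2 ≤ c₄ * L * ((H ^ 2)⁻¹ * sL2 w ^ 2 + sH1 u ^ 2) := b1
        _ ≤ c₄ * L * (c₅ * sH1 u ^ 2 + sH1 u ^ 2) :=
            mul_le_mul_of_nonneg_left (by linarith) (mul_pos hc₄ hLpos).le
        _ = c₄ * L * (c₅ + 1) * sH1 u ^ 2 := by ring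
    have hsq4 : ninf (R w - R (IH w)) ^ 2 ≤ 4 * sLinf w ^ 2 := by nlinarith [hsq]
    have hnn : 0 ≤ c₄ * L * (c₅ + 1) * sH1 u ^ 2 :=
      mul_nonneg (mul_nonneg (mul_pos hc₄ hLpos).le (by linarith)) (sq_nonneg _)
    linarith
  have ha' := ha (R w - R (IH w))
  rw [hdiff]
  have key : s12 (R w - R (IH w)) ^ 2 + L * ninf (R w - R (IH w)) ^ 2 ≤
      (2*c₂*(1+c₃) + 8*c₄*(c₅+1)) * L^2 * sH1 u^2 := by
    have h2' : L * ninf (R w - R (IH w)) ^ 2 ≤ L * (8*c₄*(c₅+1)*L*sH1 u^2) := by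
      apply mul_le_mul_of_nonneg_left h2 (by linarith)
    have hL0 : (0:ℝ) ≤ L := by linarith
    have hL2 : 1 ≤ L ^ 2 := by
      calc (1:ℝ) = 1 * 1 := (one_mul 1).symm
        _ ≤ L * L := mul_le_mul hL hL zero_le_one hL0
        _ = L ^ 2 := (sq L).symm
    have hLL : L ≤ L ^ 2 := by
      calc L = L * 1 := (mul_one L).symm
        _ ≤ L * L := mul_le_mul_of_nonneg_left hL hL0
        _ = L ^ 2 := (sq L).symm
    have e1 : 2*c₂*sH1 u^2 ≤ 2*c₂*L^2*sH1 u^2 := by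
      have h' : 2*c₂ ≤ 2*c₂*L^2 := by
        calc 2*c₂ = 2*c₂*1 := by ring
          _ ≤ 2*c₂*L^2 := mul_le_mul_of_nonneg_left hL2 (by linarith)
      exact mul_le_mul_of_nonneg_right h' (sq_nonneg _)
    have e2 : 2*c₂*c₃*L*sH1 u^2 ≤ 2*c₂*c₃*L^2*sH1 u^2 := by
      have h' : 2*c₂*c₃*L ≤ 2*c₂*c₃*L^2 :=
        mul_le_mul_of_nonneg_left hLL (by positivity)
      exact mul_le_mul_of_nonneg_right h' (sq_nonneg _)
    have h2'' : L * ninf (R w - R (IH w)) ^ 2 ≤ 8*c₄*(c₅+1)*L^2*sH1 u^2 := by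
      calc L * ninf (R w - R (IH w)) ^ 2 ≤ L * (8*c₄*(c₅+1)*L*sH1 u^2) := h2'
        _ = 8*c₄*(c₅+1)*L^2*sH1 u^2 := by ring
    have hexp : (2*c₂*(1+c₃) + 8*c₄*(c₅+1)) * L^2 * sH1 u^2
        = 2*c₂*L^2*sH1 u^2 + 2*c₂*c₃*L^2*sH1 u^2 + 8*c₄*(c₅+1)*L^2*sH1 u^2 := by ring
    rw [hexp]
    linarith
  calc n00 (R w - R (IH w)) ^ 2 ≤ c₁ * (s12 (R w - R (IH w)) ^ 2 + L * ninf (R w - R (IH w)) ^ 2) := ha'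
    _ ≤ c₁ * ((2*c₂*(1+c₃) + 8*c₄*(c₅+1)) * L^2 * sH1 u^2) :=
        mul_le_mul_of_nonneg_left key hc₁.le
    _ = c₁ * (2*c₂*(1+c₃) + 8*c₄*(c₅+1)) * L ^ 2 * sH1 u ^ 2 := by ring
end
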